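/- Stein's lemma in one dimension: if n ~ N(0, σ²) and g : ℝ → ℝ is differentiable with E[|g'(n)|] < ∞ and g(n)·exp(−n²/(2σ²)) → 0 as |n| → ∞, then E[n·g(n)] = σ²·E[g'(n)]. -/

import Mathlib

open MeasureTheory ProbabilityTheory Filter Real Topology
open scoped NNReal

/-! The Gaussian density `φ` solves `φ' = -((x - μ) / v) φ`, so `(g φ)' = φ g' - v⁻¹ (x - μ) g φ`.
This derivative is integrable and `g φ` vanishes at infinity, hence its integral over `ℝ` is zero. -/

theorem integral_eq_zero_of_hasDerivAt_of_tendsto_cocompact {f f' : ℝ → ℝ}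
    (hderiv : ∀ x, HasDerivAt f (f' x) x) (hf' : Integrable f')
    (hf : Tendsto f (cocompact ℝ) (𝓝 0)) : ∫ x, f' x = 0 := by
  rw [cocompact_eq_atBot_atTop] at hf
  simpa using integral_of_hasDerivAt_of_tendsto hderiv hf' (hf.mono_left le_sup_left)
    (hf.mono_left le_sup_right)

namespace ProbabilityTheory

variable {μ : ℝ} {v : ℝ≥0}

lemma integrable_gaussianReal_iff (hv : v ≠ 0) {f : ℝ → ℝ} :
    Integrable f (gaussianReal μ v) ↔ Integrable (fun x ↦ gaussianPDFReal μ v x * f x) := by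
  rw [gaussianReal_of_var_ne_zero _ hv, integrable_withDensity_iff_integrable_smul'
    (measurable_gaussianPDF μ v) (ae_of_all _ fun _ ↦ gaussianPDF_lt_top)]
  simp [gaussianPDF, ENNReal.toReal_ofReal (gaussianPDFReal_nonneg μ v _)]

lemma hasDerivAt_gaussianPDFReal (μ : ℝ) (v : ℝ≥0) (x : ℝ) :
    HasDerivAt (gaussianPDFReal μ v) (-((x - μ) / v) * gaussianPDFReal μ v x) x := by
  have hexp : HasDerivAt (fun x ↦ -(x - μ) ^ 2 / (2 * v)) (-((x - μ) / v)) x := by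
    exact ((((hasDerivAt_id' x).sub_const μ).pow 2).neg.div_const (2 * (v : ℝ))).congr_deriv
      (by push_cast; ring)
  refine (((Real.hasDerivAt_exp _).comp x hexp).const_mul (√(2 * π * v))⁻¹).congr_deriv ?_
  rw [gaussianPDFReal]
  ring

theorem integral_sub_mul_gaussianReal (hv : v ≠ 0) {g g' : ℝ → ℝ}
    (hg : ∀ x, HasDerivAt g (g' x) x) (hg' : Integrable g' (gaussianReal μ v))
    (hxg : Integrable (fun x ↦ (x - μ) * g x) (gaussianReal μ v))
    (hdecay : Tendsto (fun x ↦ g x * gaussianPDFReal μ v x) (cocompact ℝ) (𝓝 0)) :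
    ∫ x, (x - μ) * g x ∂gaussianReal μ v = v * ∫ x, g' x ∂gaussianReal μ v := by
  rw [integrable_gaussianReal_iff hv] at hg' hxg
  have hderiv : ∀ x, HasDerivAt (fun x ↦ g x * gaussianPDFReal μ v x)
      (gaussianPDFReal μ v x * g' x - (v : ℝ)⁻¹ * (gaussianPDFReal μ v x * ((x - μ) * g x))) x := by
    intro x
    refine ((hg x).mul (hasDerivAt_gaussianPDFReal μ v x)).congr_deriv ?_
    ring
  have hzero := integral_eq_zero_of_hasDerivAt_of_tendsto_cocompact hderiv
    (hg'.sub (hxg.const_mul _)) hdecay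
  rw [integral_sub hg' (hxg.const_mul _), integral_const_mul, sub_eq_zero] at hzero
  simp only [integral_gaussianReal_eq_integral_smul hv, smul_eq_mul]
  rw [hzero, mul_inv_cancel_left₀ (NNReal.coe_ne_zero.mpr hv)]

end ProbabilityTheory

/-- Stein's lemma in one dimension: if `n ~ N(0, σ²)` and `g : ℝ → ℝ` is
differentiable with integrable derivative and `g(x)·exp(−x²/(2σ²)) → 0` as `|x| → ∞`, then
`E[n·g(n)] = σ²·E[g'(n)]`. -/
theorem stein_lemma_one_dim (σ : ℝ≥0) (hσ : 0 < σ) (g : ℝ → ℝ)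
    (hg : Differentiable ℝ g)
    (hint : Integrable (fun x => deriv g x) (gaussianReal 0 (σ ^ 2)))
    (hint' : Integrable (fun x => x * g x) (gaussianReal 0 (σ ^ 2)))
    (hdecay : Tendsto (fun x => g x * Real.exp (-x ^ 2 / (2 * (σ : ℝ) ^ 2)))
      (Filter.cocompact ℝ) (nhds 0)) :
    ∫ x, x * g x ∂(gaussianReal 0 (σ ^ 2)) =
      (σ : ℝ) ^ 2 * ∫ x, deriv g x ∂(gaussianReal 0 (σ ^ 2)) := by
  have hv : σ ^ 2 ≠ 0 := pow_ne_zero 2 hσ.ne'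
  have hdecay' : Tendsto (fun x ↦ g x * gaussianPDFReal 0 (σ ^ 2) x) (cocompact ℝ) (𝓝 0) := by
    convert hdecay.const_mul (√(2 * π * (σ : ℝ) ^ 2))⁻¹ using 2 with x
    · simp only [gaussianPDFReal, sub_zero, NNReal.coe_pow]
      ring
    · simp
  simpa using integral_sub_mul_gaussianReal (μ := 0) hv (fun x ↦ (hg x).hasDerivAt) hint
    (by simpa using hint') hdecay'
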